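/- arXiv:2209.08491 — 2 statements merged into one kernel-verified Lean document; each statement's English description precedes it below -/
import Mathlib

section
/- Let $U$ be a unitary on $\mathcal{H}_Q \otimes \mathcal{H}_F \otimes \mathcal{H}_N$ ($N$ a 'notepad') such that for each $q \in \{0,1\}$: $U(|q\rangle \otimes |r\rangle \otimes |\mathrm{blank}\rangle) = |q\rangle \otimes |f_q\rangle \otimes |n_q\rangle$. If the reversal $V = U^{-1}$ restricted to act only as the inverse on $Q \otimes F$ is to return $Q \otimes F$ to the product state $(\psi_0|0\rangle + \psi_1|1\rangle) \otimes |r\rangle$ for all $(\psi_0,\psi_1)$ with both amplitudes nonzero, while leaving $N$ in some fixed state, then necessarily $|n_0\rangle = |n_1\rangle$ (up to global phase). -/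
/-!
Since `actQF V'` and `U` are linear, testing the reversal on two superpositions with the same
`ψ₀` separates the branches: `V' ⊗ 1` sends each branch `|q⟩|f_q⟩|n_q⟩` to `|q⟩|r⟩|nfix⟩`.
Comparing notepad factors of these product vectors gives `nfix = c_q • n_q`, and taking norms
forces `‖c_q‖ = 1`, so `n₁ = c₁⁻¹ c₀ • n₀` is a phase multiple of `n₀`.
-/

/-- Elementary tensor of a vector on `Fin 2 × F` (qubit plus friend) with a notepad
vector on `N`, realised in `EuclideanSpace ℂ ((Fin 2 × F) × N)`. -/
noncomputable def tpQFN {F N : Type*} [Fintype F] [Fintype N]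
    (v : EuclideanSpace ℂ (Fin 2 × F)) (w : EuclideanSpace ℂ N) :
    EuclideanSpace ℂ ((Fin 2 × F) × N) :=
  WithLp.toLp 2 (fun p : (Fin 2 × F) × N => v p.1 * w p.2)

/-- Elementary tensor `|q⟩ ⊗ |f⟩` in `EuclideanSpace ℂ (Fin 2 × F)`. -/
noncomputable def tpQF' {F : Type*} [Fintype F]
    (x : EuclideanSpace ℂ (Fin 2)) (y : EuclideanSpace ℂ F) :
    EuclideanSpace ℂ (Fin 2 × F) :=
  WithLp.toLp 2 (fun p : Fin 2 × F => x p.1 * y p.2)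

/-- Computational basis states of a qubit. -/
noncomputable def qbv' (q : Fin 2) : EuclideanSpace ℂ (Fin 2) := EuclideanSpace.single q 1

/-- The action of `V' ⊗ I_N` on the full space, for a map `V'` on the `Q ⊗ F` factor. -/
noncomputable def actQF {F N : Type*} [Fintype F] [Fintype N]
    (V' : EuclideanSpace ℂ (Fin 2 × F) ≃ₗᵢ[ℂ] EuclideanSpace ℂ (Fin 2 × F))
    (s : EuclideanSpace ℂ ((Fin 2 × F) × N)) :
    EuclideanSpace ℂ ((Fin 2 × F) × N) :=
  WithLp.toLp 2 (fun p : (Fin 2 × F) × N => V' (WithLp.toLp 2 (fun w => s (w, p.2))) p.1)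

section TensorVec

variable {𝕜 α β : Type*} [RCLike 𝕜]

noncomputable def tensorVec (v : EuclideanSpace 𝕜 α) (w : EuclideanSpace 𝕜 β) :
    EuclideanSpace 𝕜 (α × β) :=
  WithLp.toLp 2 fun p => v p.1 * w p.2

@[simp]
theorem tensorVec_apply (v : EuclideanSpace 𝕜 α) (w : EuclideanSpace 𝕜 β) (p : α × β) :
    tensorVec v w p = v p.1 * w p.2 :=
  rfl

theorem tensorVec_add_left (v v' : EuclideanSpace 𝕜 α) (w : EuclideanSpace 𝕜 β) :
    tensorVec (v + v') w = tensorVec v w + tensorVec v' w := by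
  ext p
  simp [add_mul]

theorem tensorVec_smul_left (c : 𝕜) (v : EuclideanSpace 𝕜 α) (w : EuclideanSpace 𝕜 β) :
    tensorVec (c • v) w = c • tensorVec v w := by
  ext p
  simp [mul_assoc]

theorem norm_tensorVec [Fintype α] [Fintype β] (v : EuclideanSpace 𝕜 α)
    (w : EuclideanSpace 𝕜 β) : ‖tensorVec v w‖ = ‖v‖ * ‖w‖ := by
  simp only [EuclideanSpace.norm_eq, tensorVec_apply, norm_mul, mul_pow,
    Fintype.sum_prod_type, ← Finset.sum_mul_sum]
  exact Real.sqrt_mul (Finset.sum_nonneg fun _ _ => by positivity) _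

theorem exists_eq_smul_of_tensorVec_eq {v u : EuclideanSpace 𝕜 α} {n m : EuclideanSpace 𝕜 β}
    (h : tensorVec v n = tensorVec u m) (hu : u ≠ 0) : ∃ c : 𝕜, m = c • n := by
  obtain ⟨a, ha⟩ : ∃ a, u a ≠ 0 := by
    by_contra! h0
    exact hu (by ext a; exact h0 a)
  refine ⟨v a / u a, ?_⟩
  ext b
  have hab := congrArg (fun s : EuclideanSpace 𝕜 (α × β) => s (a, b)) h
  simp only [tensorVec_apply] at hab
  simp only [PiLp.smul_apply, smul_eq_mul]
  field_simp
  linear_combination -hab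

end TensorVec

theorem eq_and_eq_of_forall_smul_add_smul_eq {K M : Type*} [CommRing K] [CharZero K]
    [AddCommGroup M] [Module K M] {a b c d : M}
    (h : ∀ ψ₀ ψ₁ : K, ψ₀ ≠ 0 → ψ₁ ≠ 0 → ψ₀ • a + ψ₁ • b = ψ₀ • c + ψ₁ • d) :
    a = c ∧ b = d := by
  have h₁ := h 1 1 one_ne_zero one_ne_zero
  have h₂ := h 1 2 one_ne_zero two_ne_zero
  have hbd : b = d := by
    calc b = ((1 : K) • a + (2 : K) • b) - ((1 : K) • a + (1 : K) • b) := by module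
      _ = ((1 : K) • c + (2 : K) • d) - ((1 : K) • c + (1 : K) • d) := by rw [h₁, h₂]
      _ = d := by module
  refine ⟨?_, hbd⟩
  simpa [hbd] using h₁

theorem exists_norm_eq_one_smul_eq_of_smul_eq_smul {𝕜 E : Type*} [NormedField 𝕜]
    [SeminormedAddCommGroup E] [NormedSpace 𝕜 E] {a b : 𝕜} {x y : E}
    (ha : ‖a‖ = 1) (hb : ‖b‖ = 1) (h : a • x = b • y) : ∃ c : 𝕜, ‖c‖ = 1 ∧ y = c • x := by
  have hb0 : b ≠ 0 := norm_ne_zero_iff.mp (by rw [hb]; exact one_ne_zero)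
  refine ⟨b⁻¹ * a, by rw [norm_mul, norm_inv, ha, hb, inv_one, one_mul], ?_⟩
  rw [mul_smul, h, inv_smul_smul₀ hb0]

section QubitFriendNotepad

variable {F N : Type*} [Fintype F] [Fintype N]

theorem tpQFN_eq_tensorVec (v : EuclideanSpace ℂ (Fin 2 × F)) (w : EuclideanSpace ℂ N) :
    tpQFN v w = tensorVec v w :=
  rfl

theorem tpQF'_eq_tensorVec (x : EuclideanSpace ℂ (Fin 2)) (y : EuclideanSpace ℂ F) :
    tpQF' x y = tensorVec x y :=
  rfl

theorem norm_qbv' (q : Fin 2) : ‖qbv' q‖ = 1 := by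
  simp [qbv']

variable (V' : EuclideanSpace ℂ (Fin 2 × F) ≃ₗᵢ[ℂ] EuclideanSpace ℂ (Fin 2 × F))

theorem actQF_tensorVec (v : EuclideanSpace ℂ (Fin 2 × F)) (w : EuclideanSpace ℂ N) :
    actQF V' (tensorVec v w) = tensorVec (V' v) w := by
  ext p
  have hslice : (WithLp.toLp 2 fun x => tensorVec v w (x, p.2) : EuclideanSpace ℂ (Fin 2 × F))
      = w p.2 • v := by
    ext x
    simp [mul_comm]
  change V' (WithLp.toLp 2 fun x => tensorVec v w (x, p.2)) p.1 = _
  rw [hslice, map_smul]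
  simp [mul_comm]

theorem actQF_add_smul (ψ₀ ψ₁ : ℂ) (s t : EuclideanSpace ℂ ((Fin 2 × F) × N)) :
    actQF V' (ψ₀ • s + ψ₁ • t) = ψ₀ • actQF V' s + ψ₁ • actQF V' t := by
  ext p
  have hslice : (WithLp.toLp 2 fun x => (ψ₀ • s + ψ₁ • t) (x, p.2) : EuclideanSpace ℂ (Fin 2 × F))
      = ψ₀ • (WithLp.toLp 2 fun x => s (x, p.2)) + ψ₁ • (WithLp.toLp 2 fun x => t (x, p.2)) := by
    ext x
    simp
  change V' (WithLp.toLp 2 fun x => (ψ₀ • s + ψ₁ • t) (x, p.2)) p.1 = _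
  rw [hslice, map_add, map_smul, map_smul]
  simp [actQF]

end QubitFriendNotepad

theorem notepad_record_trivial_general {F N : Type*} [Fintype F] [Fintype N]
    (U : EuclideanSpace ℂ ((Fin 2 × F) × N) ≃ₗᵢ[ℂ] EuclideanSpace ℂ ((Fin 2 × F) × N))
    (V' : EuclideanSpace ℂ (Fin 2 × F) ≃ₗᵢ[ℂ] EuclideanSpace ℂ (Fin 2 × F))
    (r : EuclideanSpace ℂ F) (fv : Fin 2 → EuclideanSpace ℂ F)
    (nv : Fin 2 → EuclideanSpace ℂ N) (blank : EuclideanSpace ℂ N)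
    (hr : ‖r‖ = 1) (hf : ∀ q, ‖fv q‖ = 1) (hn : ∀ q, ‖nv q‖ = 1)
    -- the observation: U(|q⟩ ⊗ |r⟩ ⊗ |blank⟩) = |q⟩ ⊗ |f_q⟩ ⊗ |n_q⟩
    (hU : ∀ q, U (tpQFN (tpQF' (qbv' q) r) blank) = tpQFN (tpQF' (qbv' q) (fv q)) (nv q))
    -- the reversal V' ⊗ I_N returns Q ⊗ F to the product state for all ψ₀ψ₁ ≠ 0,
    -- leaving N in some fixed state nfix
    (nfix : EuclideanSpace ℂ N)
    (hrev : ∀ ψ₀ ψ₁ : ℂ, ψ₀ ≠ 0 → ψ₁ ≠ 0 →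
      actQF V' (U (tpQFN (tpQF' (ψ₀ • qbv' 0 + ψ₁ • qbv' 1) r) blank))
        = tpQFN (tpQF' (ψ₀ • qbv' 0 + ψ₁ • qbv' 1) r) nfix) :
    ∃ c : ℂ, ‖c‖ = 1 ∧ nv 1 = c • nv 0 := by
  simp only [tpQFN_eq_tensorVec, tpQF'_eq_tensorVec] at hU hrev
  have hback : ∀ q, tensorVec (V' (tensorVec (qbv' q) (fv q))) (nv q)
      = tensorVec (tensorVec (qbv' q) r) nfix := by
    have := eq_and_eq_of_forall_smul_add_smul_eq fun ψ₀ ψ₁ h₀ h₁ => by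
      simpa only [tensorVec_add_left, tensorVec_smul_left, map_add, map_smul,
        actQF_add_smul] using hrev ψ₀ ψ₁ h₀ h₁
    simpa only [Fin.forall_fin_two, hU, actQF_tensorVec] using this
  have hphase : ∀ q, ∃ c : ℂ, ‖c‖ = 1 ∧ nfix = c • nv q := by
    intro q
    have hnorm := congrArg norm (hback q)
    simp only [norm_tensorVec, LinearIsometryEquiv.norm_map, norm_qbv', hf, hn, hr,
      one_mul] at hnorm
    have hu : tensorVec (qbv' q) r ≠ 0 := by
      rw [← norm_ne_zero_iff, norm_tensorVec, norm_qbv', hr, one_mul]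
      exact one_ne_zero
    obtain ⟨c, hc⟩ := exists_eq_smul_of_tensorVec_eq (hback q) hu
    refine ⟨c, ?_, hc⟩
    rw [hc, norm_smul, hn, mul_one] at hnorm
    exact hnorm.symm
  obtain ⟨c₀, hc₀, h₀⟩ := hphase 0
  obtain ⟨c₁, hc₁, h₁⟩ := hphase 1
  exact exists_norm_eq_one_smul_eq_of_smul_eq_smul hc₀ hc₁ (h₀.symm.trans h₁)

/-- against Deutsch's "I knew 0 or 1" record.  If a reversal acting only
on `Q ⊗ F` returns `Q ⊗ F` to the original product state for every genuine
superposition, while leaving the notepad `N` in some fixed state, then the notepad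
states `|n₀⟩`, `|n₁⟩` must coincide up to a global phase. -/
theorem notepad_record_trivial {F N : Type*} [Fintype F] [Fintype N]
    (U : EuclideanSpace ℂ ((Fin 2 × F) × N) ≃ₗᵢ[ℂ] EuclideanSpace ℂ ((Fin 2 × F) × N))
    (V' : EuclideanSpace ℂ (Fin 2 × F) ≃ₗᵢ[ℂ] EuclideanSpace ℂ (Fin 2 × F))
    (r : EuclideanSpace ℂ F) (fv : Fin 2 → EuclideanSpace ℂ F)
    (nv : Fin 2 → EuclideanSpace ℂ N) (blank : EuclideanSpace ℂ N)
    (hr : ‖r‖ = 1) (hf : ∀ q, ‖fv q‖ = 1) (hn : ∀ q, ‖nv q‖ = 1) (hbl : ‖blank‖ = 1)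
    -- the observation: U(|q⟩ ⊗ |r⟩ ⊗ |blank⟩) = |q⟩ ⊗ |f_q⟩ ⊗ |n_q⟩
    (hU : ∀ q, U (tpQFN (tpQF' (qbv' q) r) blank) = tpQFN (tpQF' (qbv' q) (fv q)) (nv q))
    -- the reversal V' ⊗ I_N returns Q ⊗ F to the product state for all ψ₀ψ₁ ≠ 0,
    -- leaving N in some fixed state nfix
    (nfix : EuclideanSpace ℂ N)
    (hrev : ∀ ψ₀ ψ₁ : ℂ, ψ₀ ≠ 0 → ψ₁ ≠ 0 →
      actQF V' (U (tpQFN (tpQF' (ψ₀ • qbv' 0 + ψ₁ • qbv' 1) r) blank))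
        = tpQFN (tpQF' (ψ₀ • qbv' 0 + ψ₁ • qbv' 1) r) nfix) :
    ∃ c : ℂ, ‖c‖ = 1 ∧ nv 1 = c • nv 0 :=
  notepad_record_trivial_general U V' r fv nv blank hr hf hn hU nfix hrev
end

section
/- The set of correlations $\wp(a,b|x,y)$ ($a,b \in \{\pm 1\}$, $x,y \in \{1,2\}$) admitting an LF model is a convex polytope: it is closed under convex combinations, and it is the convex hull of finitely many extreme points. -/
/-- The Local Friendliness model of Eq. (1), for a behaviour regarded as a point of the
real vector space `(Fin 2 × Fin 2 × Fin 2 × Fin 2) → ℝ` (coordinates `(a,b,x,y)`):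
`x = 0` encodes the paper's setting `1` and `x = 1` encodes setting `2`. -/
def LFModelPt (w : (Fin 2 × Fin 2 × Fin 2 × Fin 2) → ℝ) : Prop :=
  ∃ (Pc : Fin 2 → ℝ) (PB : Fin 2 → Fin 2 → Fin 2 → ℝ)
    (Pab : Fin 2 → Fin 2 → Fin 2 → Fin 2 → ℝ),
    (∀ c, 0 ≤ Pc c) ∧ (∑ c, Pc c = 1) ∧
    (∀ b c y, 0 ≤ PB b c y) ∧ (∀ c y, ∑ b, PB b c y = 1) ∧
    (∀ a b c y, 0 ≤ Pab a b c y) ∧ (∀ c y, ∑ a, ∑ b, Pab a b c y = 1) ∧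
    (∀ a c, ∑ b, Pab a b c 0 = ∑ b, Pab a b c 1) ∧
    (∀ a b y, w (a, b, 0, y) = ∑ c, (if a = c then (1:ℝ) else 0) * PB b c y * Pc c) ∧
    (∀ a b y, w (a, b, 1, y) = ∑ c, Pab a b c y * Pc c)

/-!
Reading Alice's outcome in setting `1` as the hidden variable `c`, the LF constraints say exactly
that, for each of Alice's settings `x`, the behaviour `(a, b, y) ↦ ℘(a, b | x, y)` is a probability
distribution for every `y` whose Alice-marginal does not depend on `y`, the two settings being
otherwise unconstrained. Such a behaviour factors as `p(a) r(b | a, y)` and is therefore a mixture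
of the deterministic behaviours `a = a₀, b = f y`. Hence the LF set is, up to a linear reshaping of
coordinates, the product of two copies of the convex hull of finitely many deterministic
behaviours, which is the convex hull of the finitely many products of deterministic behaviours.
-/

open Set Finset

section NoSignallingToAlice

variable (α β Y : Type*) [Fintype α] [Fintype β]

def noSignallingToAlice : Set (α × β × Y → ℝ) :=
  {q | (∀ i, 0 ≤ q i) ∧ (∀ y, ∑ a, ∑ b, q (a, b, y) = 1) ∧
    ∀ a y y', ∑ b, q (a, b, y) = ∑ b, q (a, b, y')}

theorem convex_noSignallingToAlice : Convex ℝ (noSignallingToAlice α β Y) := by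
  rintro q ⟨hq₀, hq₁, hqm⟩ q' ⟨hq₀', hq₁', hqm'⟩ s t hs ht hst
  refine ⟨fun i => ?_, fun y => ?_, fun a y y' => ?_⟩
  · exact add_nonneg (mul_nonneg hs (hq₀ i)) (mul_nonneg ht (hq₀' i))
  · simp only [Pi.add_apply, Pi.smul_apply, smul_eq_mul, sum_add_distrib, ← mul_sum, hq₁,
      hq₁', mul_one, hst]
  · simp only [Pi.add_apply, Pi.smul_apply, smul_eq_mul, sum_add_distrib, ← mul_sum, hqm a y y',
      hqm' a y y']

variable {α β Y} [DecidableEq α]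

def withAliceOutcome (a : α) : (Y → β → ℝ) →ₗ[ℝ] (α × β × Y → ℝ) where
  toFun r i := if i.1 = a then r i.2.2 i.2.1 else 0
  map_add' r s := by ext i; split_ifs <;> simp [*]
  map_smul' c r := by ext i; split_ifs <;> simp [*]

theorem withAliceOutcome_mem (a : α) {r : Y → β → ℝ} (hr : ∀ y, r y ∈ stdSimplex ℝ β) :
    withAliceOutcome a r ∈ noSignallingToAlice α β Y := by
  refine ⟨fun i => ?_, fun y => ?_, fun a' y y' => ?_⟩
  · simp only [withAliceOutcome, LinearMap.coe_mk, AddHom.coe_mk]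
    split_ifs
    exacts [(hr _).1 _, le_rfl]
  · simp [withAliceOutcome, (hr y).2]
  · by_cases ha : a' = a <;> simp [withAliceOutcome, ha, (hr y).2, (hr y').2]

theorem exists_eq_sum_withAliceOutcome [Nonempty β] [Nonempty Y] {q : α × β × Y → ℝ}
    (hq : q ∈ noSignallingToAlice α β Y) :
    ∃ p ∈ stdSimplex ℝ α, ∃ r : α → Y → β → ℝ, (∀ a y, r a y ∈ stdSimplex ℝ β) ∧
      q = ∑ a, p a • withAliceOutcome a (r a) := by
  classical
  obtain ⟨hq₀, hq₁, hqm⟩ := hq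
  obtain ⟨y₀⟩ := ‹Nonempty Y›
  obtain ⟨b₀⟩ := ‹Nonempty β›
  let p : α → ℝ := fun a => ∑ b, q (a, b, y₀)
  have hp₀ (a : α) : 0 ≤ p a := sum_nonneg fun b _ => hq₀ _
  have hq_zero {a : α} (b : β) (y : Y) (ha : p a = 0) : q (a, b, y) = 0 :=
    (sum_eq_zero_iff_of_nonneg fun b _ => hq₀ _).1 ((hqm a y y₀).trans ha) b (mem_univ b)
  let r : α → Y → β → ℝ := fun a y => if p a = 0 then Pi.single b₀ 1 else fun b => q (a, b, y) / p a
  refine ⟨p, ⟨hp₀, hq₁ y₀⟩, r, fun a y => ?_, ?_⟩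
  · by_cases ha : p a = 0
    · simpa [r, ha] using single_mem_stdSimplex ℝ b₀
    · refine ⟨fun b => ?_, ?_⟩
      · simpa [r, ha] using div_nonneg (hq₀ _) (hp₀ a)
      · simp only [r, ha, if_false, ← sum_div, hqm a y y₀]
        exact div_self ha
  · ext ⟨a, b, y⟩
    by_cases ha : p a = 0
    · simp [withAliceOutcome, ha, hq_zero b y ha]
    · simp [withAliceOutcome, r, ha, mul_div_cancel₀ _ ha]

variable [DecidableEq β]

def deterministicBehaviour (a : α) (f : Y → β) : α × β × Y → ℝ :=
  withAliceOutcome a fun y => Pi.single (f y) 1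

theorem convexHull_deterministicBehaviour [Finite Y] [Nonempty β] [Nonempty Y] :
    convexHull ℝ (range fun af : α × (Y → β) => deterministicBehaviour af.1 af.2) =
      noSignallingToAlice α β Y := by
  refine (convexHull_min ?_ (convex_noSignallingToAlice α β Y)).antisymm fun q hq => ?_
  · rintro _ ⟨⟨a, f⟩, rfl⟩
    exact withAliceOutcome_mem a fun y => single_mem_stdSimplex ℝ (f y)
  obtain ⟨p, hp, r, hr, rfl⟩ := exists_eq_sum_withAliceOutcome hq
  refine (convex_convexHull ℝ _).sum_mem (fun a _ => hp.1 a) hp.2 fun a _ => ?_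
  have hr_hull : r a ∈ convexHull ℝ (univ.pi fun _ => range fun b : β => Pi.single b (1 : ℝ)) := by
    rw [convexHull_pi, convexHull_rangle_single_eq_stdSimplex]
    exact fun y _ => hr a y
  refine convexHull_mono ?_ ((withAliceOutcome a).image_convexHull _ ▸ mem_image_of_mem _ hr_hull)
  rintro _ ⟨g, hg, rfl⟩
  choose f hf using fun y => hg y (mem_univ y)
  exact ⟨(a, f), by simp [deterministicBehaviour, hf]⟩

end NoSignallingToAlice

def ofSettingSlices {α β X Y : Type*} : (X → α × β × Y → ℝ) →ₗ[ℝ] (α × β × X × Y → ℝ) where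
  toFun g i := g i.2.2.1 (i.1, i.2.1, i.2.2.2)
  map_add' _ _ := rfl
  map_smul' _ _ := rfl

theorem lfModelPt_iff (w : Fin 2 × Fin 2 × Fin 2 × Fin 2 → ℝ) :
    LFModelPt w ↔ ∀ x, (fun i => w (i.1, i.2.1, x, i.2.2)) ∈ noSignallingToAlice _ _ _ := by
  constructor
  · rintro ⟨Pc, PB, Pab, hPc₀, hPc₁, hPB₀, hPB₁, hPab₀, hPab₁, hNS, hw₀, hw₁⟩ x
    have hmix (q : Fin 2 → Fin 2 × Fin 2 × Fin 2 → ℝ) (hq : ∀ c, q c ∈ noSignallingToAlice _ _ _)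
        (hwq : (fun i => w (i.1, i.2.1, x, i.2.2)) = ∑ c, Pc c • q c) :
        (fun i => w (i.1, i.2.1, x, i.2.2)) ∈ noSignallingToAlice _ _ _ :=
      hwq ▸ (convex_noSignallingToAlice _ _ _).sum_mem (fun c _ => hPc₀ c) hPc₁ fun c _ => hq c
    fin_cases x
    · refine hmix (fun c => withAliceOutcome c fun y b => PB b c y)
        (fun c => withAliceOutcome_mem c fun y => ⟨fun b => hPB₀ b c y, hPB₁ c y⟩) ?_
      ext ⟨a, b, y⟩
      simp [hw₀, withAliceOutcome, mul_comm]
    · refine hmix (fun c i => Pab i.1 i.2.1 c i.2.2) (fun c => ⟨fun i => hPab₀ _ _ c _,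
        fun y => hPab₁ c y, fun a y y' => ?_⟩) ?_
      · fin_cases y <;> fin_cases y' <;> simp [hNS]
      · ext ⟨a, b, y⟩
        simp [hw₁, mul_comm]
  · intro h
    obtain ⟨p, hp, r, hr, hw₀⟩ := exists_eq_sum_withAliceOutcome (h 0)
    obtain ⟨hw₁₀, hw₁₁, hw₁m⟩ := h 1
    refine ⟨p, fun b c y => r c y b, fun a b c y => w (a, b, 1, y), hp.1, hp.2,
      fun b c y => (hr c y).1 b, fun c y => (hr c y).2, fun a b c y => hw₁₀ (a, b, y),
      fun c y => hw₁₁ y, fun a c => hw₁m a 0 1, fun a b y => ?_, fun a b y => ?_⟩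
    · simpa [withAliceOutcome, mul_comm] using congrFun hw₀ (a, b, y)
    · rw [← mul_sum, hp.2, mul_one]

theorem setOf_lfModelPt_eq_image :
    {w | LFModelPt w} =
      ofSettingSlices '' univ.pi fun _ => noSignallingToAlice (Fin 2) (Fin 2) (Fin 2) := by
  ext w
  constructor
  · exact fun h => ⟨fun x i => w (i.1, i.2.1, x, i.2.2), fun x _ => (lfModelPt_iff w).1 h x, rfl⟩
  · rintro ⟨g, hg, rfl⟩
    exact (lfModelPt_iff _).2 fun x => hg x (mem_univ x)

/-- the set of correlations admitting an LF model is a convex polytope: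
it is convex, and it is the convex hull of finitely many extreme points. -/
theorem lf_set_is_polytope :
    Convex ℝ {w : (Fin 2 × Fin 2 × Fin 2 × Fin 2) → ℝ | LFModelPt w} ∧
    ∃ S : Finset ((Fin 2 × Fin 2 × Fin 2 × Fin 2) → ℝ),
      {w : (Fin 2 × Fin 2 × Fin 2 × Fin 2) → ℝ | LFModelPt w} = convexHull ℝ (S : Set _) := by
  set V := ofSettingSlices '' univ.pi fun _ : Fin 2 =>
    range fun af : Fin 2 × (Fin 2 → Fin 2) => deterministicBehaviour af.1 af.2
  have hLF : {w | LFModelPt w} = convexHull ℝ V := by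
    rw [← LinearMap.image_convexHull, convexHull_pi, setOf_lfModelPt_eq_image]
    simp only [convexHull_deterministicBehaviour]
  have hV : V.Finite := (Set.Finite.pi fun _ => finite_range _).image _
  exact ⟨hLF ▸ convex_convexHull ℝ V, hV.toFinset, by rw [hV.coe_toFinset, hLF]⟩
end
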